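/- arXiv:1310.5671 — 2 statements merged into one kernel-verified Lean document; each statement's English description precedes it below -/
import Mathlib

section
/- Let x : ℕ → ℂⁿ be an injective sequence whose image E = {x_j : j ∈ ℕ} is a closed discrete subset of ℂⁿ (i.e., E has no accumulation point in ℂⁿ). Then for every sequence a : ℕ → ℂ there exists an entire function f on ℂⁿ with f(x_j) = a_j for all j ∈ ℕ. -/
/-!
The points `x m` escape to infinity: a compact set containing infinitely many of them would
contain an accumulation point. The interpolant is a series `∑ g m` built by Newton's scheme:
`g m` vanishes at `x 0, …, x (m - 1)`, corrects the value at `x m`, and is at most `2⁻ᵐ` on the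
ball of radius `‖x m‖ - 1`. It is a product of linear forms separating `x m` from the earlier
points, damped by `exp (t (ℓ z - ‖x m‖))`, where `ℓ` is a norming functional of `x m` and `t` is
large. As `‖x m‖ → ∞`, the series converges uniformly on balls, and the Cauchy estimates for the
differentials make its sum entire.
-/

open Set

noncomputable section

/-- Polynomial hull of a compact set `C ⊆ ℂⁿ`. -/
def polyHullCompact {n : ℕ} (C : Set (Fin n → ℂ)) : Set (Fin n → ℂ) :=
  {z | ∀ p : MvPolynomial (Fin n) ℂ,
    ‖MvPolynomial.eval z p‖ ≤ sSup ((fun w => ‖MvPolynomial.eval w p‖) '' C)}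

/-- Polynomial hull of a closed set `X ⊆ ℂⁿ`: union of hulls of compact subsets. -/
def polyHull {n : ℕ} (X : Set (Fin n → ℂ)) : Set (Fin n → ℂ) :=
  ⋃ C ∈ {C : Set (Fin n → ℂ) | IsCompact C ∧ C ⊆ X}, polyHullCompact C

/-- `h(X) = X̂ \ X`. -/
def hHull {n : ℕ} (X : Set (Fin n → ℂ)) : Set (Fin n → ℂ) := polyHull X \ X

/-- A closed set `X` is polynomially convex if `h(X) = ∅`. -/
def IsPolyConvex {n : ℕ} (X : Set (Fin n → ℂ)) : Prop := hHull X = ∅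

/-- `M` has bounded E-hulls if `h(K ∪ M)` is bounded for every compact `K`. -/
def HasBoundedEHulls {n : ℕ} (M : Set (Fin n → ℂ)) : Prop :=
  ∀ K : Set (Fin n → ℂ), IsCompact K → Bornology.IsBounded (hHull (K ∪ M))

/-- `M` is a Carleman continuum: entire functions approximate continuous functions
on `M` in the Whitney `C⁰` topology. -/
def IsCarleman {n : ℕ} (M : Set (Fin n → ℂ)) : Prop :=
  ∀ f : (Fin n → ℂ) → ℂ, ContinuousOn f M →
  ∀ ε : (Fin n → ℂ) → ℝ, ContinuousOn ε M → (∀ x ∈ M, 0 < ε x) →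
  ∃ g : (Fin n → ℂ) → ℂ, Differentiable ℂ g ∧ ∀ x ∈ M, ‖g x - f x‖ < ε x

open Filter Metric Topology

section CauchyEstimate

variable {E F : Type*} [NormedAddCommGroup E] [NormedSpace ℂ E] [NormedAddCommGroup F]
  [NormedSpace ℂ F]

theorem Complex.norm_fderiv_le_of_forall_mem_closedBall_norm_le {f : E → F}
    (hf : Differentiable ℂ f) {z : E} {r C : ℝ} (hr : 0 < r)
    (hC : ∀ w ∈ closedBall z r, ‖f w‖ ≤ C) : ‖fderiv ℂ f z‖ ≤ C / r := by
  have hC₀ : 0 ≤ C := (norm_nonneg _).trans (hC z (mem_closedBall_self hr.le))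
  refine ContinuousLinearMap.opNorm_le_bound _ (by positivity) fun v => ?_
  rcases eq_or_ne v 0 with rfl | hv
  · simp
  have hv₀ : 0 < ‖v‖ := norm_pos_iff.2 hv
  have hline : HasDerivAt (fun t : ℂ => z + t • v) v 0 := by
    simpa using ((hasDerivAt_id (0 : ℂ)).smul_const v).const_add z
  have hderiv : HasDerivAt (f ∘ fun t : ℂ => z + t • v) (fderiv ℂ f z v) 0 := by
    have := (hf (z + (0 : ℂ) • v)).hasFDerivAt.comp_hasDerivAt 0 hline
    rwa [zero_smul, add_zero] at this
  have hsphere : ∀ t ∈ sphere (0 : ℂ) (r / ‖v‖), ‖f (z + t • v)‖ ≤ C := by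
    intro t ht
    refine hC _ ?_
    rw [mem_sphere_zero_iff_norm] at ht
    rw [mem_closedBall, dist_eq_norm, add_sub_cancel_left, norm_smul, ht,
      div_mul_cancel₀ _ hv₀.ne']
  have hcauchy := Complex.norm_deriv_le_of_forall_mem_sphere_norm_le (by positivity)
    (hf.comp ((differentiable_id.smul_const v).const_add z)).diffContOnCl hsphere
  rw [hderiv.deriv] at hcauchy
  calc ‖fderiv ℂ f z v‖ ≤ C / (r / ‖v‖) := hcauchy
    _ = C / r * ‖v‖ := by field_simp

end CauchyEstimate

section SeriesOfEntireMaps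

variable {ι E F : Type*} [NormedAddCommGroup E] [NormedSpace ℂ E] [NormedAddCommGroup F]
  [NormedSpace ℂ F] [CompleteSpace F]

theorem differentiableAt_tsum_of_forall_mem_ball_norm_le {f : ι → E → F}
    (hf : ∀ i, Differentiable ℂ (f i)) {u : ι → ℝ} (hu : Summable u) {z₀ : E} {r : ℝ}
    (hr : 0 < r) (hbound : ∀ i, ∀ z ∈ ball z₀ r, ‖f i z‖ ≤ u i) :
    DifferentiableAt ℂ (fun z => ∑' i, f i z) z₀ := by
  have hz₀ : z₀ ∈ ball z₀ (r / 2) := mem_ball_self (by positivity)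
  have hfderiv : ∀ i, ∀ z ∈ ball z₀ (r / 2), ‖fderiv ℂ (f i) z‖ ≤ u i / (r / 2) := by
    refine fun i z hz => Complex.norm_fderiv_le_of_forall_mem_closedBall_norm_le (hf i)
      (by positivity) fun w hw => hbound i w ?_
    rw [mem_ball] at hz ⊢
    rw [mem_closedBall] at hw
    linarith [dist_triangle w z z₀]
  have hsummable : Summable fun i => f i z₀ :=
    .of_norm_bounded hu fun i => hbound i z₀ (mem_ball_self hr)
  exact (hasFDerivAt_tsum_of_isPreconnected (hu.div_const _) isOpen_ball
    (convex_ball _ _).isPreconnected (fun i z _ => (hf i z).hasFDerivAt) hfderiv hz₀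
    hsummable hz₀).differentiableAt

theorem differentiable_tsum_of_eventually_norm_le {f : ℕ → E → F}
    (hf : ∀ m, Differentiable ℂ (f m)) {u : ℕ → ℝ} (hu : Summable u)
    (hbound : ∀ R, ∀ᶠ m in atTop, ∀ z, ‖z‖ ≤ R → ‖f m z‖ ≤ u m) :
    Differentiable ℂ fun z => ∑' m, f m z := by
  have hsummable : ∀ z, Summable fun m => f m z := fun z => by
    obtain ⟨N, hN⟩ := eventually_atTop.1 (hbound ‖z‖)
    exact (summable_nat_add_iff N).1 <| .of_norm_bounded ((summable_nat_add_iff N).2 hu)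
      fun m => hN (m + N) (by omega) z le_rfl
  intro z₀
  obtain ⟨N, hN⟩ := eventually_atTop.1 (hbound (‖z₀‖ + 1))
  have hsplit : (fun z => ∑' m, f m z) =
      fun z => ∑ m ∈ Finset.range N, f m z + ∑' m, f (m + N) z :=
    funext fun z => ((hsummable z).sum_add_tsum_nat_add N).symm
  rw [hsplit]
  refine (Differentiable.fun_sum fun m _ => hf m).differentiableAt.add
    (differentiableAt_tsum_of_forall_mem_ball_norm_le (fun m => hf (m + N))
      ((summable_nat_add_iff N).2 hu) one_pos fun m z hz => hN (m + N) (by omega) z ?_)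
  rw [mem_ball, dist_eq_norm] at hz
  linarith [norm_le_norm_add_norm_sub' z z₀]

end SeriesOfEntireMaps

section Bumps

variable {E : Type*} [NormedAddCommGroup E] [NormedSpace ℂ E]

theorem exists_differentiable_eq_zero_on_finset_ne_zero (s : Finset E) {w : E} (hw : w ∉ s) :
    ∃ P : E → ℂ, Differentiable ℂ P ∧ (∀ y ∈ s, P y = 0) ∧ P w ≠ 0 ∧
      ∀ z, ‖P z‖ ≤ ∏ y ∈ s, (‖z‖ + ‖y‖) := by
  choose ℓ hℓ hℓw using fun y : E => exists_dual_vector'' ℂ (w - y)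
  refine ⟨fun z => ∏ y ∈ s, ℓ y (z - y), ?_, fun y hy => Finset.prod_eq_zero hy (by simp), ?_,
    fun z => ?_⟩
  · classical
    exact fun z => (HasFDerivAt.finsetProd (g := fun y z => ℓ y (z - y)) fun y _ =>
      ((ℓ y).differentiable.comp (differentiable_id.sub_const y) z).hasFDerivAt).differentiableAt
  · refine Finset.prod_ne_zero_iff.2 fun y hy => ?_
    rw [hℓw, Ne, RCLike.ofReal_eq_zero, norm_eq_zero, sub_eq_zero]
    exact (ne_of_mem_of_not_mem hy hw).symm
  · rw [norm_prod]
    refine Finset.prod_le_prod (fun _ _ => norm_nonneg _) fun y _ => ?_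
    calc ‖ℓ y (z - y)‖ ≤ ‖ℓ y‖ * ‖z - y‖ := (ℓ y).le_opNorm _
      _ ≤ 1 * ‖z - y‖ := by gcongr; exact hℓ y
      _ ≤ ‖z‖ + ‖y‖ := by rw [one_mul]; exact norm_sub_le z y

theorem norm_cexp_mul_sub_norm_le {ℓ : StrongDual ℂ E} (hℓ : ‖ℓ‖ ≤ 1) (w z : E) {t : ℝ}
    (ht : 0 ≤ t) : ‖Complex.exp (t * (ℓ z - ‖w‖))‖ ≤ Real.exp (t * (‖z‖ - ‖w‖)) := by
  rw [Complex.norm_exp]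
  gcongr
  have hre : (ℓ z).re ≤ ‖z‖ :=
    calc (ℓ z).re ≤ ‖ℓ z‖ := Complex.re_le_norm _
      _ ≤ ‖ℓ‖ * ‖z‖ := ℓ.le_opNorm z
      _ ≤ 1 * ‖z‖ := by gcongr
      _ = ‖z‖ := one_mul _
  simpa [Complex.mul_re] using mul_le_mul_of_nonneg_left (sub_le_sub_right hre ‖w‖) ht

theorem exists_differentiable_bump (s : Finset E) {w : E} (hw : w ∉ s) (c : ℂ) {R ε : ℝ}
    (hR : R < ‖w‖) (hε : 0 < ε) :
    ∃ g : E → ℂ, Differentiable ℂ g ∧ (∀ y ∈ s, g y = 0) ∧ g w = c ∧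
      ∀ z, ‖z‖ ≤ R → ‖g z‖ ≤ ε := by
  obtain ⟨P, hPdiff, hPzero, hPw, hPbound⟩ := exists_differentiable_eq_zero_on_finset_ne_zero s hw
  obtain ⟨ℓ, hℓ, hℓw⟩ := exists_dual_vector'' ℂ w
  set A := ‖c / P w‖ * ∏ y ∈ s, (R + ‖y‖) with hA
  have hdecay : Tendsto (fun t : ℝ => A * Real.exp (t * (R - ‖w‖))) atTop (𝓝 0) := by
    simpa using (Real.tendsto_exp_atBot.comp
      (tendsto_id.atTop_mul_const_of_neg (sub_neg.2 hR))).const_mul A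
  obtain ⟨t, ht, htε⟩ := ((eventually_ge_atTop 0).and (hdecay.eventually (ge_mem_nhds hε))).exists
  refine ⟨fun z => c / P w * P z * Complex.exp (t * (ℓ z - ‖w‖)), ?_, fun y hy => ?_, ?_,
    fun z hz => ?_⟩
  · fun_prop
  · simp [hPzero y hy]
  · simp [hℓw, hPw]
  · calc ‖c / P w * P z * Complex.exp (t * (ℓ z - ‖w‖))‖
        ≤ ‖c / P w‖ * (∏ y ∈ s, (‖z‖ + ‖y‖)) * Real.exp (t * (‖z‖ - ‖w‖)) := by
          rw [norm_mul, norm_mul]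
          gcongr
          exacts [hPbound z, norm_cexp_mul_sub_norm_le hℓ w z ht]
      _ ≤ A * Real.exp (t * (R - ‖w‖)) := by
          have hR₀ : 0 ≤ R := (norm_nonneg z).trans hz
          rw [hA]
          gcongr
      _ ≤ ε := htε

end Bumps

/-- Newton's scheme: if `bump m c` vanishes at `x 0, …, x (m - 1)` and equals `c` at `x m`, the
`m`-th step corrects the value at `x m` without disturbing the earlier nodes. -/
def newtonPartialSum {E : Type*} (x : ℕ → E) (a : ℕ → ℂ) (bump : ℕ → ℂ → E → ℂ) :
    ℕ → E → ℂ
  | 0 => 0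
  | m + 1 => newtonPartialSum x a bump m + bump m (a m - newtonPartialSum x a bump m (x m))

theorem newtonPartialSum_apply_of_lt {E : Type*} {x : ℕ → E} {a : ℕ → ℂ}
    {bump : ℕ → ℂ → E → ℂ} (hzero : ∀ m c, ∀ k < m, bump m c (x k) = 0)
    (hval : ∀ m c, bump m c (x m) = c) {m k : ℕ} (hk : k < m) :
    newtonPartialSum x a bump m (x k) = a k := by
  induction m with
  | zero => exact absurd hk (Nat.not_lt_zero k)
  | succ m ih =>
    simp only [newtonPartialSum, Pi.add_apply]
    rcases (Nat.lt_succ_iff_lt_or_eq.1 hk) with hk | rfl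
    · rw [ih hk, hzero m _ k hk, add_zero]
    · rw [hval, add_sub_cancel]

theorem exists_differentiable_interpolation_of_tendsto_norm {E : Type*} [NormedAddCommGroup E]
    [NormedSpace ℂ E] {x : ℕ → E} (hinj : Function.Injective x)
    (hx : Tendsto (fun m => ‖x m‖) atTop atTop) (a : ℕ → ℂ) :
    ∃ f : E → ℂ, Differentiable ℂ f ∧ ∀ j, f (x j) = a j := by
  classical
  have hbump : ∀ m (c : ℂ), ∃ g : E → ℂ, Differentiable ℂ g ∧ (∀ k < m, g (x k) = 0) ∧
      g (x m) = c ∧ ∀ z, ‖z‖ ≤ ‖x m‖ - 1 → ‖g z‖ ≤ (1 / 2) ^ m := by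
    intro m c
    obtain ⟨g, hg, hzero, hval, hbound⟩ := exists_differentiable_bump
      ((Finset.range m).image x) (w := x m) (by simp [hinj.eq_iff]) c (sub_one_lt _)
      (by positivity : (0 : ℝ) < (1 / 2) ^ m)
    exact ⟨g, hg, fun k hk => hzero _ (Finset.mem_image_of_mem _ (Finset.mem_range.2 hk)),
      hval, hbound⟩
  choose bump hdiff hzero hval hbound using hbump
  set F := newtonPartialSum x a bump
  have hstep : ∀ m, F (m + 1) - F m = bump m (a m - F m (x m)) := fun m => by
    simp only [F, newtonPartialSum, add_sub_cancel_left]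
  have hF : ∀ {m k}, k < m → F m (x k) = a k := newtonPartialSum_apply_of_lt hzero hval
  refine ⟨fun z => ∑' m, (F (m + 1) - F m) z, ?_, fun j => ?_⟩
  · refine differentiable_tsum_of_eventually_norm_le (fun m => hstep m ▸ hdiff m _)
      summable_geometric_two fun R => ?_
    filter_upwards [hx.eventually_ge_atTop (R + 1)] with m hm z hz
    exact hstep m ▸ hbound m _ z (by linarith)
  · have hvanish : ∀ m ∉ Finset.range (j + 1), (F (m + 1) - F m) (x j) = 0 := fun m hm => by
      rw [Finset.mem_range, not_lt] at hm
      rw [Pi.sub_apply, hF (by omega), hF (by omega), sub_self]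
    calc ∑' m, (F (m + 1) - F m) (x j)
        = ∑ m ∈ Finset.range (j + 1), (F (m + 1) (x j) - F m (x j)) := tsum_eq_sum hvanish
      _ = F (j + 1) (x j) - F 0 (x j) := Finset.sum_range_sub (fun m => F m (x j)) _
      _ = a j := by rw [hF j.lt_succ_self]; exact sub_zero _

theorem tendsto_cocompact_of_injective_of_forall_not_accPt {X : Type*} [TopologicalSpace X]
    {x : ℕ → X} (hinj : Function.Injective x) (hdisc : ∀ z, ¬AccPt z (𝓟 (range x))) :
    Tendsto x atTop (cocompact X) := by
  refine hasBasis_cocompact.tendsto_right_iff.2 fun K hK => ?_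
  have hfin : (K ∩ range x).Finite := by
    by_contra hinf
    obtain ⟨z, -, hz⟩ := Set.Infinite.exists_accPt_of_subset_isCompact hinf hK inter_subset_left
    exact hdisc z (hz.mono (principal_mono.2 inter_subset_right))
  rw [← Nat.cofinite_eq_atTop, eventually_cofinite]
  exact (hfin.preimage hinj.injOn).subset fun m hm => ⟨not_not.1 hm, m, rfl⟩

theorem entire_interpolation_on_discrete_sequence_general {n : ℕ} (x : ℕ → (Fin n → ℂ))
    (hinj : Function.Injective x)
    (hdisc : ∀ z : Fin n → ℂ, ¬ AccPt z (Filter.principal (Set.range x)))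
    (a : ℕ → ℂ) :
    ∃ f : (Fin n → ℂ) → ℂ, Differentiable ℂ f ∧ ∀ j : ℕ, f (x j) = a j :=
  exists_differentiable_interpolation_of_tendsto_norm hinj
    (tendsto_norm_cocompact_atTop.comp
      (tendsto_cocompact_of_injective_of_forall_not_accPt hinj hdisc)) a

/-- entire interpolation on a closed discrete sequence. -/
theorem entire_interpolation_on_discrete_sequence {n : ℕ} (x : ℕ → (Fin n → ℂ))
    (hinj : Function.Injective x)
    (hclosed : IsClosed (Set.range x))
    (hdisc : ∀ z : Fin n → ℂ, ¬ AccPt z (Filter.principal (Set.range x)))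
    (a : ℕ → ℂ) :
    ∃ f : (Fin n → ℂ) → ℂ, Differentiable ℂ f ∧ ∀ j : ℕ, f (x j) = a j :=
  entire_interpolation_on_discrete_sequence_general x hinj hdisc a
end
end

section
/- Let M ⊆ ℂⁿ be a closed set with bounded E-hulls. Assume that M has the following uniform approximation property: for every compact set L ⊆ ℂⁿ and every compact set C ⊆ M such that L ∪ C is polynomially convex, every continuous function on L ∪ C that is holomorphic on an open neighborhood of L can be uniformly approximated on L ∪ C by entire functions. Then for every compact set K ⊆ ℂⁿ such that K ∪ M is polynomially convex, the following Carleman-type approximation holds: for every continuous function f on K ∪ M that is holomorphic on an open neighborhood of K, and every continuous ε : K ∪ M → (0,∞), there exists an entire function g on ℂⁿ with |g(x) − f(x)| < ε(x) for all x ∈ K ∪ M. -/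
/-!
Exhaust `K ∪ M` by the compact stages `K ∪ (M ∩ B(0, t_j))` and build entire functions `s_j`
inductively. By bounded E-hulls, the polynomial hull of `B(0, r) ∪ (M ∩ B(0, t))` lies in
`M ∪ B(0, R)` for some `R = R(r)`, so it is the union of a compact set `L ⊆ B(0, R)` and a compact
subset of `M`; this is exactly the shape on which uniform approximation is available. Glue `s_j`
(near `L`) to a continuous extension of `f` (on `M` beyond `R + 2`, where the next stage adds new
points) with a cutoff, and approximate the glued function on the hull: the result `s_{j+1}` is
within `2⁻¹ ^ j` of `s_j` on `B(0, j)` and within `ε (1 - 2⁻¹ ^ (j + 2))` of `f` on the stage.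
Cauchy estimates make the locally uniform limit entire, and its error is at most `ε`; running
the construction with `ε / 2` gives strict inequality.
-/

open Set

noncomputable section

open Metric Filter Topology

section PolynomialHull

variable {n : ℕ} {C D X : Set (Fin n → ℂ)}

lemma bddAbove_norm_eval_image (hC : IsCompact C) (p : MvPolynomial (Fin n) ℂ) :
    BddAbove ((fun w => ‖MvPolynomial.eval w p‖) '' C) :=
  (hC.image (MvPolynomial.continuous_eval p).norm).bddAbove

lemma subset_polyHullCompact (hC : IsCompact C) : C ⊆ polyHullCompact C :=
  fun _ hz p => le_csSup (bddAbove_norm_eval_image hC p) (mem_image_of_mem _ hz)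

lemma polyHullCompact_mono (hD : IsCompact D) (h : C ⊆ D) :
    polyHullCompact C ⊆ polyHullCompact D := by
  intro z hz p
  refine (hz p).trans ?_
  rcases C.eq_empty_or_nonempty with rfl | hne
  · rw [image_empty, Real.sSup_empty]
    exact Real.sSup_nonneg (by rintro _ ⟨w, -, rfl⟩; positivity)
  · exact csSup_le_csSup (bddAbove_norm_eval_image hD p) (hne.image _) (image_mono h)

lemma isClosed_polyHullCompact (C : Set (Fin n → ℂ)) : IsClosed (polyHullCompact C) := by
  simp only [polyHullCompact, ofPred_forall]
  exact isClosed_iInter fun p =>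
    isClosed_le (MvPolynomial.continuous_eval p).norm continuous_const

/-- The coordinate polynomials confine the hull to any sup-norm ball containing `C`. -/
lemma polyHullCompact_subset_closedBall {R : ℝ} (hR : 0 ≤ R) (h : C ⊆ closedBall 0 R) :
    polyHullCompact C ⊆ closedBall 0 R := by
  intro z hz
  rw [mem_closedBall_zero_iff, pi_norm_le_iff_of_nonneg hR]
  intro i
  have hi := hz (MvPolynomial.X i)
  simp only [MvPolynomial.eval_X] at hi
  refine hi.trans (Real.sSup_le ?_ hR)
  rintro _ ⟨w, hw, rfl⟩
  exact (norm_le_pi_norm w i).trans (mem_closedBall_zero_iff.1 (h hw))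

lemma isCompact_polyHullCompact (hC : IsCompact C) : IsCompact (polyHullCompact C) := by
  obtain ⟨R, hR⟩ := hC.isBounded.subset_closedBall 0
  exact (isCompact_closedBall 0 (max R 0)).of_isClosed_subset (isClosed_polyHullCompact C)
    (polyHullCompact_subset_closedBall (le_max_right _ _)
      (hR.trans (closedBall_subset_closedBall (le_max_left _ _))))

lemma polyHullCompact_polyHullCompact (hC : IsCompact C) :
    polyHullCompact (polyHullCompact C) = polyHullCompact C := by
  refine (subset_polyHullCompact (isCompact_polyHullCompact hC)).antisymm' fun z hz p => ?_
  refine (hz p).trans (Real.sSup_le ?_ (Real.sSup_nonneg ?_))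
  · rintro _ ⟨w, hw, rfl⟩
    exact hw p
  · rintro _ ⟨w, -, rfl⟩
    positivity

lemma polyHullCompact_subset_polyHull (hC : IsCompact C) (h : C ⊆ X) :
    polyHullCompact C ⊆ polyHull X :=
  subset_biUnion_of_mem (u := polyHullCompact) ⟨hC, h⟩

lemma polyHull_subset_hHull_union (X : Set (Fin n → ℂ)) : polyHull X ⊆ hHull X ∪ X := by
  rw [hHull, sdiff_union_self]
  exact subset_union_left

lemma IsPolyConvex.polyHull_subset (hX : IsPolyConvex X) : polyHull X ⊆ X := by
  simpa [show hHull X = ∅ from hX] using polyHull_subset_hHull_union X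

lemma isPolyConvex_polyHullCompact (hC : IsCompact C) : IsPolyConvex (polyHullCompact C) := by
  rw [IsPolyConvex, hHull, sdiff_eq_empty, polyHull]
  refine iUnion₂_subset fun D ⟨_, hD⟩ => ?_
  simpa only [polyHullCompact_polyHullCompact hC] using
    polyHullCompact_mono (isCompact_polyHullCompact hC) hD

end PolynomialHull

section GeometricLimits

variable {X F : Type*} [NormedAddCommGroup F] [CompleteSpace F]

/-- On each `S N` the tail of the sequence from index `N` on moves by a geometric series, which
bounds its distance to the pointwise limit. -/
theorem exists_tendstoUniformlyOn_of_norm_sub_le_geometric {u : ℕ → X → F} {S : ℕ → Set X}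
    (hS : Monotone S) (hu : ∀ j, ∀ z ∈ S j, ‖u (j + 1) z - u j z‖ ≤ 2⁻¹ ^ j) :
    ∃ g : X → F, ∀ N, TendstoUniformlyOn u g atTop (S N) := by
  refine ⟨fun z => limUnder atTop fun j => u j z, fun N => ?_⟩
  have htail : ∀ z ∈ S N, ∀ k, ‖u (k + N) z - limUnder atTop (fun j => u j z)‖ ≤
      2 * 2⁻¹ ^ (k + N) := by
    intro z hz
    have hgeom : ∀ k, dist (u (k + N) z) (u (k + 1 + N) z) ≤ 2⁻¹ ^ N * 2⁻¹ ^ k := fun k => by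
      rw [dist_comm, dist_eq_norm, ← pow_add, add_comm N, add_right_comm]
      exact hu _ z (hS (Nat.le_add_left N k) hz)
    have hlim := (cauchySeq_of_le_geometric _ _ (by norm_num) hgeom).tendsto_limUnder
    rw [((tendsto_add_atTop_iff_nat (f := fun j => u j z) N).1 hlim).limUnder_eq]
    intro k
    rw [← dist_eq_norm]
    refine (dist_le_of_le_geometric_of_tendsto _ _ (by norm_num) hgeom hlim k).trans_eq ?_
    rw [pow_add]
    ring
  rw [Metric.tendstoUniformlyOn_iff]
  intro ε hε
  obtain ⟨K, hK⟩ := exists_pow_lt_of_lt_one (half_pos hε) (by norm_num : (2⁻¹ : ℝ) < 1)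
  filter_upwards [eventually_ge_atTop (K + N)] with j hj z hz
  obtain ⟨k, rfl⟩ : ∃ k, j = k + N := ⟨j - N, by omega⟩
  rw [dist_comm, dist_eq_norm]
  calc _ ≤ 2 * 2⁻¹ ^ (k + N) := htail z hz k
    _ ≤ 2 * 2⁻¹ ^ K := by
      gcongr 2 * ?_
      exact pow_le_pow_of_le_one (by norm_num) (by norm_num) (by omega)
    _ < ε := by linarith

end GeometricLimits

section HolomorphicLimits

variable {E F : Type*} [NormedAddCommGroup E] [NormedSpace ℂ E] [NormedAddCommGroup F]
  [NormedSpace ℂ F]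

lemma norm_fderiv_le_of_forall_norm_le {h : E → F} {z : E} {r C : ℝ} (hr : 0 < r)
    (hd : DifferentiableOn ℂ h (ball z r)) (hb : ∀ w ∈ ball z r, ‖h w‖ ≤ C) :
    ‖fderiv ℂ h z‖ ≤ 2 * C / r := by
  refine Complex.norm_fderiv_le_div_of_mapsTo_ball hd (fun w hw => ?_) hr
  rw [mem_closedBall, dist_eq_norm, two_mul]
  exact (norm_sub_le _ _).trans (add_le_add (hb w hw) (hb z (mem_ball_self hr)))

/-- Cauchy estimates make the derivatives of a uniformly convergent sequence of holomorphic
functions uniformly Cauchy on a smaller ball, so the limit is differentiable. -/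
theorem differentiableAt_of_tendstoUniformlyOn_ball [CompleteSpace F] {u : ℕ → E → F}
    {g : E → F} {x : E} {r : ℝ} (hr : 0 < r) (hu : ∀ j, DifferentiableOn ℂ (u j) (ball x r))
    (hlim : TendstoUniformlyOn u g atTop (ball x r)) : DifferentiableAt ℂ g x := by
  have hρ : 0 < r / 2 := half_pos hr
  have hsub : ∀ z ∈ ball x (r / 2), ball z (r / 2) ⊆ ball x r := fun z hz =>
    ball_subset_ball' (by rw [mem_ball] at hz; linarith)
  have hcauchy : UniformCauchySeqOn (fun j => fderiv ℂ (u j)) atTop (ball x (r / 2)) := by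
    rw [Metric.uniformCauchySeqOn_iff]
    intro ε hε
    obtain ⟨N, hN⟩ := Metric.uniformCauchySeqOn_iff.1 hlim.uniformCauchySeqOn
      (ε * (r / 2) / 4) (by positivity)
    refine ⟨N, fun m hm k hk z hz => ?_⟩
    have hdiff : ∀ j, DifferentiableAt ℂ (u j) z := fun j =>
      (hu j).differentiableAt (isOpen_ball.mem_nhds (hsub z hz (mem_ball_self hρ)))
    have hbound := norm_fderiv_le_of_forall_norm_le hρ (((hu m).sub (hu k)).mono (hsub z hz))
      fun w hw => (dist_eq_norm (u m w) (u k w) ▸ hN m hm k hk w (hsub z hz hw)).le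
    rw [dist_eq_norm, ← fderiv_sub (hdiff m) (hdiff k)]
    calc ‖fderiv ℂ (u m - u k) z‖ ≤ 2 * (ε * (r / 2) / 4) / (r / 2) := hbound
      _ < ε := by field_simp; linarith
  have hderiv := hcauchy.tendstoUniformlyOn_of_tendsto
    (f := fun z => limUnder atTop fun j => fderiv ℂ (u j) z) fun z hz =>
    (hcauchy.cauchySeq hz).tendsto_limUnder
  refine (hasFDerivAt_of_tendstoUniformlyOn isOpen_ball hderiv (fun j z hz => ?_)
    (fun z hz => hlim.tendsto_at (hsub x (mem_ball_self hρ) hz)) (mem_ball_self hρ))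
    |>.differentiableAt
  exact ((hu j).differentiableAt (isOpen_ball.mem_nhds (hsub z hz (mem_ball_self hρ))))
    |>.hasFDerivAt

theorem exists_differentiable_tendsto_of_norm_sub_le [CompleteSpace F] {u : ℕ → E → F}
    (hu : ∀ j, Differentiable ℂ (u j))
    (hinc : ∀ j : ℕ, ∀ z ∈ closedBall (0 : E) j, ‖u (j + 1) z - u j z‖ ≤ 2⁻¹ ^ j) :
    ∃ g : E → F, Differentiable ℂ g ∧ ∀ z, Tendsto (fun j => u j z) atTop (𝓝 (g z)) := by
  obtain ⟨g, hg⟩ := exists_tendstoUniformlyOn_of_norm_sub_le_geometric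
    (fun _ _ h => closedBall_subset_closedBall (Nat.cast_le.2 h)) hinc
  have hball : ∀ z : E, ∃ N : ℕ, ball z 1 ⊆ closedBall 0 N := fun z => by
    obtain ⟨N, hN⟩ := exists_nat_ge (‖z‖ + 1)
    refine ⟨N, fun w hw => ?_⟩
    rw [mem_closedBall_zero_iff]
    linarith [norm_le_norm_add_norm_sub' w z, mem_ball_iff_norm.1 hw]
  refine ⟨g, fun z => ?_, fun z => ?_⟩ <;> obtain ⟨N, hN⟩ := hball z
  · exact differentiableAt_of_tendstoUniformlyOn_ball one_pos
      (fun j => (hu j).differentiableOn) ((hg N).mono hN)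
  · exact (hg N).tendsto_at (hN (mem_ball_self one_pos))

end HolomorphicLimits

theorem exists_seq_of_exists_succ {α : Type*} {P : ℕ → α → Prop} {Q : ℕ → α → α → Prop}
    (h₀ : ∃ a, P 0 a) (h : ∀ j a, P j a → ∃ b, P (j + 1) b ∧ Q j a b) :
    ∃ u : ℕ → α, ∀ j, P j (u j) ∧ Q j (u j) (u (j + 1)) := by
  obtain ⟨a₀, ha₀⟩ := h₀
  choose! next hnext using h
  let u : ℕ → α := fun j => Nat.rec a₀ next j
  have hu : ∀ j, P j (u j) := fun j => Nat.rec ha₀ (fun j ih => (hnext j _ ih).1) j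
  exact ⟨u, fun j => ⟨hu j, (hnext j _ (hu j)).2⟩⟩

theorem IsCompact.exists_pos_forall_le {α : Type*} [TopologicalSpace α] {A : Set α}
    (hA : IsCompact A) {ε : α → ℝ} (hε : ContinuousOn ε A) (hpos : ∀ x ∈ A, 0 < ε x) :
    ∃ m, 0 < m ∧ m ≤ 1 ∧ ∀ x ∈ A, m ≤ ε x := by
  rcases A.eq_empty_or_nonempty with rfl | hne
  · exact ⟨1, one_pos, le_rfl, by simp⟩
  obtain ⟨x₀, hx₀, hmin⟩ := hA.exists_isMinOn hne hε
  exact ⟨min (ε x₀) 1, lt_min (hpos x₀ hx₀) one_pos, min_le_right _ _,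
    fun x hx => (min_le_left _ _).trans (hmin hx)⟩

section Approximation

variable {n : ℕ} {M : Set (Fin n → ℂ)}

theorem HasBoundedEHulls.exists_monotone_radius (hBE : HasBoundedEHulls M) (r : ℕ → ℝ) :
    ∃ R : ℕ → ℝ, Monotone R ∧
      ∀ j, r j ≤ R j ∧ polyHull (closedBall 0 (r j) ∪ M) ⊆ closedBall 0 (R j) ∪ M := by
  choose ρ hρ using fun j =>
    (hBE _ (isCompact_closedBall (0 : Fin n → ℂ) (r j))).subset_closedBall 0
  set R := partialSups fun j => max (ρ j) (r j)
  have hR : ∀ j, max (ρ j) (r j) ≤ R j := le_partialSups fun j => max (ρ j) (r j)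
  refine ⟨R, R.monotone, fun j => ⟨le_of_max_le_right (hR j), ?_⟩⟩
  refine (polyHull_subset_hHull_union _).trans (union_subset ?_ ?_)
  · exact (hρ j).trans
      ((closedBall_subset_closedBall (le_of_max_le_left (hR j))).trans subset_union_left)
  · exact union_subset_union_left M (closedBall_subset_closedBall (le_of_max_le_right (hR j)))

def HasUniformApprox (M : Set (Fin n → ℂ)) : Prop :=
  ∀ L C : Set (Fin n → ℂ), IsCompact L → IsCompact C → C ⊆ M →
    IsPolyConvex (L ∪ C) →
    ∀ f : (Fin n → ℂ) → ℂ, ContinuousOn f (L ∪ C) →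
    (∃ U : Set (Fin n → ℂ), IsOpen U ∧ L ⊆ U ∧ DifferentiableOn ℂ f U) →
    ∀ δ : ℝ, 0 < δ →
    ∃ g : (Fin n → ℂ) → ℂ, Differentiable ℂ g ∧ ∀ x ∈ L ∪ C, ‖g x - f x‖ < δ

theorem HasUniformApprox.exists_approx_on_polyHullCompact (hM : HasUniformApprox M)
    (hMc : IsClosed M) {A L : Set (Fin n → ℂ)}
    (hA : IsCompact A) (hL : IsCompact L) (hLA : L ⊆ polyHullCompact A)
    (hAL : polyHullCompact A ⊆ L ∪ M) {G : (Fin n → ℂ) → ℂ}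
    (hG : ContinuousOn G (polyHullCompact A))
    (hGL : ∃ U, IsOpen U ∧ L ⊆ U ∧ DifferentiableOn ℂ G U) {δ : ℝ} (hδ : 0 < δ) :
    ∃ g, Differentiable ℂ g ∧ ∀ x ∈ polyHullCompact A, ‖g x - G x‖ < δ := by
  have hsplit : L ∪ (polyHullCompact A ∩ M) = polyHullCompact A :=
    (union_subset hLA inter_subset_left).antisymm fun x hx =>
      (hAL hx).imp id fun hxM => ⟨hx, hxM⟩
  obtain ⟨g, hg, hgG⟩ := hM L _ hL ((isCompact_polyHullCompact hA).inter_right hMc)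
    inter_subset_right (by rw [hsplit]; exact isPolyConvex_polyHullCompact hA) G
    (by rwa [hsplit]) hGL δ hδ
  exact ⟨g, hg, fun x hx => hgG x (by rwa [hsplit])⟩

theorem HasUniformApprox.exists_initial_approx (hM : HasUniformApprox M) (hMc : IsClosed M)
    {K : Set (Fin n → ℂ)} (hK : IsCompact K) (hKM : IsPolyConvex (K ∪ M))
    {f : (Fin n → ℂ) → ℂ} (hf : ContinuousOn f (K ∪ M))
    (hfK : ∃ U, IsOpen U ∧ K ⊆ U ∧ DifferentiableOn ℂ f U) (T : ℝ) {δ : ℝ} (hδ : 0 < δ) :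
    ∃ g, Differentiable ℂ g ∧ ∀ x ∈ K ∪ (M ∩ closedBall 0 T), ‖g x - f x‖ < δ := by
  have hA : IsCompact (K ∪ (M ∩ closedBall 0 T)) :=
    hK.union ((isCompact_closedBall 0 T).inter_left hMc)
  have hD : polyHullCompact (K ∪ (M ∩ closedBall 0 T)) ⊆ K ∪ M :=
    (polyHullCompact_subset_polyHull hA (union_subset_union_right K inter_subset_left)).trans
      hKM.polyHull_subset
  obtain ⟨g, hg, hgf⟩ := hM.exists_approx_on_polyHullCompact hMc hA hK
    (subset_union_left.trans (subset_polyHullCompact hA)) hD (hf.mono hD) hfK hδ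
  exact ⟨g, hg, fun x hx => hgf x (subset_polyHullCompact hA hx)⟩

/-- The new approximant follows `s` on the ball of radius `R + 1`, which contains the part of the
hull lying off `M`, and follows `F` on the part of `M` beyond radius `R + 2`. -/
theorem HasUniformApprox.exists_glued_approx (hM : HasUniformApprox M) (hMc : IsClosed M)
    {r R : ℝ} (hrR : r ≤ R) (hR : polyHull (closedBall 0 r ∪ M) ⊆ closedBall 0 R ∪ M) (T : ℝ)
    {F s : (Fin n → ℂ) → ℂ} (hF : Continuous F) (hs : Differentiable ℂ s) {δ : ℝ} (hδ : 0 < δ) :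
    ∃ s', Differentiable ℂ s' ∧
      (∀ x ∈ closedBall 0 r ∪ (M ∩ closedBall 0 T), ‖s' x - F x‖ < δ + ‖s x - F x‖) ∧
      (∀ x ∈ M ∩ closedBall 0 T, R + 2 ≤ ‖x‖ → ‖s' x - F x‖ < δ) ∧
      ∀ x ∈ closedBall 0 r, ‖s' x - s x‖ < δ := by
  set A := closedBall (0 : Fin n → ℂ) r ∪ (M ∩ closedBall 0 T)
  have hA : IsCompact A :=
    (isCompact_closedBall 0 r).union ((isCompact_closedBall 0 T).inter_left hMc)
  have hAD : A ⊆ polyHullCompact A := subset_polyHullCompact hA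
  have hDM : polyHullCompact A ⊆ closedBall 0 R ∪ M :=
    (polyHullCompact_subset_polyHull hA (union_subset_union_right _ inter_subset_left)).trans hR
  obtain ⟨χ, hχfar, hχnear, hχ01⟩ := exists_continuous_zero_one_of_isClosed
    (isClosed_le continuous_const continuous_norm : IsClosed {x : Fin n → ℂ | R + 2 ≤ ‖x‖})
    (isClosed_closedBall (x := (0 : Fin n → ℂ)) (ε := R + 1))
    (disjoint_left.2 fun x (hfar : R + 2 ≤ ‖x‖) hnear => by
      linarith [mem_closedBall_zero_iff.1 hnear])
  set G := fun x => F x + (χ x : ℂ) * (s x - F x)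
  have hGF : ∀ x, ‖G x - F x‖ = χ x * ‖s x - F x‖ := fun x => by
    simp [G, Complex.norm_real, abs_of_nonneg (hχ01 x).1]
  have hGs : ∀ x ∈ closedBall 0 (R + 1), G x = s x := fun x hx => by
    simp [G, hχnear hx]
  obtain ⟨s', hs', hs'G⟩ := hM.exists_approx_on_polyHullCompact hMc hA
    ((isCompact_polyHullCompact hA).inter_right isClosed_closedBall) inter_subset_left
    (fun x hx => (hDM hx).imp (fun h => ⟨hx, h⟩) id)
    (hF.add ((Complex.continuous_ofReal.comp χ.continuous).mul (hs.continuous.sub hF))).continuousOn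
    ⟨ball 0 (R + 1), isOpen_ball, fun x hx => closedBall_subset_ball (by linarith) hx.2,
      hs.differentiableOn.congr fun x hx => hGs x (ball_subset_closedBall hx)⟩ hδ
  have hclose : ∀ x ∈ A, ‖s' x - F x‖ < δ + χ x * ‖s x - F x‖ := fun x hx => by
    rw [← hGF]
    exact (norm_sub_le_norm_sub_add_norm_sub _ (G x) _).trans_lt
      (add_lt_add_of_lt_of_le (hs'G x (hAD hx)) le_rfl)
  refine ⟨s', hs', fun x hx => (hclose x hx).trans_le ?_, fun x hx hfar => ?_, fun x hx => ?_⟩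
  · gcongr
    exact mul_le_of_le_one_left (norm_nonneg _) (hχ01 x).2
  · simpa [hχfar hfar] using hclose x (Or.inr hx)
  · rw [← hGs x (closedBall_subset_closedBall (by linarith) hx)]
    exact hs'G x (hAD (Or.inl hx))

/-- Points of `M` beyond radius `T₀ ≥ R + 2` are new: there the glued function is `F`, so their
error is just `m q` with `q = 2⁻¹ ^ (j + 2)`. Older points add `m q ≤ ε q` to their previous error
`ε (1 - 2 q)`. -/
theorem HasUniformApprox.exists_succ_approx (hM : HasUniformApprox M) (hMc : IsClosed M)
    {K : Set (Fin n → ℂ)} {r R T₀ T₁ m : ℝ} (j : ℕ) (hKr : K ⊆ closedBall 0 r) (hjr : (j : ℝ) ≤ r)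
    (hrR : r ≤ R) (hR : polyHull (closedBall 0 r ∪ M) ⊆ closedBall 0 R ∪ M) (hRT : R + 2 ≤ T₀)
    {F s : (Fin n → ℂ) → ℂ} {ε : (Fin n → ℂ) → ℝ} (hF : Continuous F) (hs : Differentiable ℂ s)
    (hm : 0 < m) (hm1 : m ≤ 1) (hmε : ∀ x ∈ K ∪ (M ∩ closedBall 0 T₁), m ≤ ε x)
    (hsF : ∀ x ∈ K ∪ (M ∩ closedBall 0 T₀), ‖s x - F x‖ < ε x * (1 - 2⁻¹ ^ (j + 1))) :
    ∃ s', (Differentiable ℂ s' ∧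
        ∀ x ∈ K ∪ (M ∩ closedBall 0 T₁), ‖s' x - F x‖ < ε x * (1 - 2⁻¹ ^ (j + 1 + 1))) ∧
      ∀ z ∈ closedBall (0 : Fin n → ℂ) j, ‖s' z - s z‖ ≤ 2⁻¹ ^ j := by
  set q : ℝ := 2⁻¹ ^ (j + 1 + 1)
  have hq : 0 < q := by positivity
  have h2q : 2⁻¹ ^ (j + 1) = 2 * q := by simp only [q, pow_succ]; ring
  have hq1 : 2 * q ≤ 1 := h2q ▸ pow_le_one₀ (by norm_num) (by norm_num)
  obtain ⟨s', hs', hold, hfresh, hnear⟩ :=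
    hM.exists_glued_approx hMc hrR hR T₁ hF hs (mul_pos hm hq)
  refine ⟨s', ⟨hs', fun x hx => ?_⟩, fun z hz => ?_⟩
  · have hmq : m * q ≤ ε x * q := mul_le_mul_of_nonneg_right (hmε x hx) hq.le
    by_cases hx₀ : x ∈ K ∪ (M ∩ closedBall 0 T₀)
    · have := hold x (union_subset_union_left _ hKr hx)
      linarith [h2q ▸ hsF x hx₀]
    · obtain ⟨hxM, hxT₁⟩ := hx.resolve_left fun h => hx₀ (Or.inl h)
      have hfar : R + 2 ≤ ‖x‖ := by
        by_contra! h
        exact hx₀ (Or.inr ⟨hxM, mem_closedBall_zero_iff.2 (by linarith)⟩)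
      have := hfresh x ⟨hxM, hxT₁⟩ hfar
      nlinarith [hm.trans_le (hmε x hx)]
  · calc ‖s' z - s z‖ ≤ m * q := (hnear z (closedBall_subset_closedBall hjr hz)).le
      _ ≤ 1 * 2⁻¹ ^ j := mul_le_mul hm1 (pow_le_pow_of_le_one (by norm_num) (by norm_num)
          (by omega)) hq.le zero_le_one
      _ = 2⁻¹ ^ j := one_mul _

theorem HasUniformApprox.exists_seq_approx (hM : HasUniformApprox M) (hMc : IsClosed M)
    {K : Set (Fin n → ℂ)} (hK : IsCompact K) (hKM : IsPolyConvex (K ∪ M))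
    {f F : (Fin n → ℂ) → ℂ} (hf : ContinuousOn f (K ∪ M))
    (hfK : ∃ U, IsOpen U ∧ K ⊆ U ∧ DifferentiableOn ℂ f U) (hF : Continuous F)
    (hFf : EqOn F f (K ∪ M)) {ε : (Fin n → ℂ) → ℝ} (hε : ContinuousOn ε (K ∪ M))
    (hεpos : ∀ x ∈ K ∪ M, 0 < ε x) {ρ : ℝ} {R : ℕ → ℝ} (hKρ : K ⊆ closedBall 0 ρ) (hρ : 0 ≤ ρ)
    (hR : ∀ j : ℕ, ρ + j ≤ R j ∧ polyHull (closedBall 0 (ρ + j) ∪ M) ⊆ closedBall 0 (R j) ∪ M) :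
    ∃ u : ℕ → (Fin n → ℂ) → ℂ, ∀ j,
      (Differentiable ℂ (u j) ∧ ∀ x ∈ K ∪ (M ∩ closedBall 0 (R (j + 1) + 2)),
        ‖u j x - F x‖ < ε x * (1 - 2⁻¹ ^ (j + 1))) ∧
      ∀ z ∈ closedBall (0 : Fin n → ℂ) j, ‖u (j + 1) z - u j z‖ ≤ 2⁻¹ ^ j := by
  have hstage : ∀ j, K ∪ (M ∩ closedBall 0 (R (j + 1) + 2)) ⊆ K ∪ M := fun j =>
    union_subset_union_right K inter_subset_left
  choose m hm using fun j =>
    (hK.union ((isCompact_closedBall 0 _).inter_left hMc)).exists_pos_forall_le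
      (hε.mono (hstage j)) fun x hx => hεpos x (hstage j hx)
  refine exists_seq_of_exists_succ (P := fun j s => Differentiable ℂ s ∧
      ∀ x ∈ K ∪ (M ∩ closedBall 0 (R (j + 1) + 2)), ‖s x - F x‖ < ε x * (1 - 2⁻¹ ^ (j + 1)))
    (Q := fun j s s' => ∀ z ∈ closedBall (0 : Fin n → ℂ) j, ‖s' z - s z‖ ≤ 2⁻¹ ^ j)
    ?_ fun j s ⟨hs, hsF⟩ => ?_
  · obtain ⟨s, hs, hsf⟩ := hM.exists_initial_approx hMc hK hKM hf hfK _ (half_pos (hm 0).1)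
    refine ⟨s, hs, fun x hx => ?_⟩
    rw [hFf (hstage 0 hx)]
    linarith [hsf x hx, (hm 0).2.2 x hx]
  · exact hM.exists_succ_approx hMc j
      (hKρ.trans (closedBall_subset_closedBall (le_add_of_nonneg_right (Nat.cast_nonneg _))))
      (by push_cast; linarith) (hR (j + 1)).1 (hR (j + 1)).2 le_rfl hF hs
      (hm (j + 1)).1 (hm (j + 1)).2.1 (hm (j + 1)).2.2 hsF

/-- The stages `K ∪ (M ∩ B(0, R (j + 1) + 2))` increase and exhaust `K ∪ M`. -/
theorem HasUniformApprox.exists_seq_eventually_le (hM : HasUniformApprox M) (hMc : IsClosed M)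
    (hBE : HasBoundedEHulls M) {K : Set (Fin n → ℂ)} (hK : IsCompact K)
    (hKM : IsPolyConvex (K ∪ M)) {f : (Fin n → ℂ) → ℂ} (hf : ContinuousOn f (K ∪ M))
    (hfK : ∃ U, IsOpen U ∧ K ⊆ U ∧ DifferentiableOn ℂ f U) {ε : (Fin n → ℂ) → ℝ}
    (hε : ContinuousOn ε (K ∪ M)) (hεpos : ∀ x ∈ K ∪ M, 0 < ε x) :
    ∃ u : ℕ → (Fin n → ℂ) → ℂ, (∀ j, Differentiable ℂ (u j)) ∧
      (∀ j : ℕ, ∀ z ∈ closedBall (0 : Fin n → ℂ) j, ‖u (j + 1) z - u j z‖ ≤ 2⁻¹ ^ j) ∧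
      ∀ x ∈ K ∪ M, ∀ᶠ j in atTop, ‖u j x - f x‖ ≤ ε x := by
  obtain ⟨F, hF⟩ := ContinuousMap.exists_restrict_eq (hK.isClosed.union hMc)
    ⟨(K ∪ M).domRestrict f, hf.domRestrict⟩
  have hFf : EqOn F f (K ∪ M) := fun x hx => ContinuousMap.congr_fun hF ⟨x, hx⟩
  obtain ⟨ρ, hρ, hKρ⟩ := hK.isBounded.subset_closedBall_lt 0 0
  obtain ⟨R, hRmono, hR⟩ := hBE.exists_monotone_radius fun j => ρ + j
  obtain ⟨u, hu⟩ := hM.exists_seq_approx hMc hK hKM hf hfK F.continuous hFf hε hεpos hKρ hρ.le hR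
  refine ⟨u, fun j => (hu j).1.1, fun j => (hu j).2, fun x hx => ?_⟩
  obtain ⟨i, hi⟩ : ∃ i : ℕ, x ∈ K ∪ (M ∩ closedBall 0 (R (i + 1) + 2)) := by
    rcases hx with hxK | hxM
    · exact ⟨0, Or.inl hxK⟩
    obtain ⟨i, hi⟩ := exists_nat_ge ‖x‖
    have hiR : (i : ℝ) ≤ R (i + 1) + 2 := by
      have := (hR (i + 1)).1
      push_cast at this
      linarith
    exact ⟨i, Or.inr ⟨hxM, mem_closedBall_zero_iff.2 (hi.trans hiR)⟩⟩
  filter_upwards [eventually_ge_atTop i] with j hj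
  have hij : R (i + 1) + 2 ≤ R (j + 1) + 2 := by linarith [hRmono (Nat.succ_le_succ hj)]
  have hxj := (hu j).1.2 x (union_subset_union_right K
    (inter_subset_inter_right M (closedBall_subset_closedBall hij)) hi)
  rw [← hFf hx]
  refine hxj.le.trans (mul_le_of_le_one_right (hεpos x hx).le ?_)
  linarith [pow_pos (by norm_num : (0 : ℝ) < 2⁻¹) (j + 1)]

end Approximation

/-- bounded E-hulls plus uniform approximation on compact pieces implies
Carleman-type approximation on `K ∪ M` for polynomially convex `K ∪ M`. -/
theorem carleman_approx_of_boundedEHulls_and_uniform_approx {n : ℕ}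
    (M : Set (Fin n → ℂ)) (hMclosed : IsClosed M) (hBE : HasBoundedEHulls M)
    (hApprox : ∀ L C : Set (Fin n → ℂ), IsCompact L → IsCompact C → C ⊆ M →
      IsPolyConvex (L ∪ C) →
      ∀ f : (Fin n → ℂ) → ℂ, ContinuousOn f (L ∪ C) →
      (∃ U : Set (Fin n → ℂ), IsOpen U ∧ L ⊆ U ∧ DifferentiableOn ℂ f U) →
      ∀ δ : ℝ, 0 < δ →
      ∃ g : (Fin n → ℂ) → ℂ, Differentiable ℂ g ∧ ∀ x ∈ L ∪ C, ‖g x - f x‖ < δ) :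
    ∀ K : Set (Fin n → ℂ), IsCompact K → IsPolyConvex (K ∪ M) →
    ∀ f : (Fin n → ℂ) → ℂ, ContinuousOn f (K ∪ M) →
    (∃ U : Set (Fin n → ℂ), IsOpen U ∧ K ⊆ U ∧ DifferentiableOn ℂ f U) →
    ∀ ε : (Fin n → ℂ) → ℝ, ContinuousOn ε (K ∪ M) → (∀ x ∈ K ∪ M, 0 < ε x) →
    ∃ g : (Fin n → ℂ) → ℂ, Differentiable ℂ g ∧ ∀ x ∈ K ∪ M, ‖g x - f x‖ < ε x := by
  intro K hK hKM f hf hfK ε hε hεpos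
  obtain ⟨u, hu, hinc, hclose⟩ := HasUniformApprox.exists_seq_eventually_le hApprox hMclosed hBE
    hK hKM hf hfK (hε.div_const 2) fun x hx => half_pos (hεpos x hx)
  obtain ⟨g, hg, hlim⟩ := exists_differentiable_tendsto_of_norm_sub_le hu hinc
  refine ⟨g, hg, fun x hx => ?_⟩
  have hgx : ‖g x - f x‖ ≤ ε x / 2 := le_of_tendsto ((hlim x).sub_const (f x)).norm (hclose x hx)
  linarith [hεpos x hx]
end
end
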